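/- arXiv:1207.4311 — 3 statements merged into one kernel-verified Lean document; each statement's English description precedes it below -/
import Mathlib

section
/- Assume κ^{<κ} = κ. Every Borel function f : 2^κ → 2^κ is continuous on a co-meager set: there exist κ-many dense open sets D_i ⊆ 2^κ (i < κ) such that f restricted to ⋂_{i<κ} D_i is continuous. -/
open Set

universe u

namespace GDST

def KS (I : Type u) : Type u := I → I
def CS (I : Type u) : Type u := I → Bool

def kBasic {I : Type u} [LT I] (ζ : I → I) (β : I) : Set (KS I) :=
  {η : KS I | ∀ α : I, α < β → η α = ζ α}

def cBasic {I : Type u} [LT I] (ζ : I → Bool) (β : I) : Set (CS I) :=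
  {η : CS I | ∀ α : I, α < β → η α = ζ α}

instance kTop {I : Type u} [LT I] : TopologicalSpace (KS I) :=
  TopologicalSpace.generateFrom {U | ∃ ζ β, U = kBasic ζ β}

instance cTop {I : Type u} [LT I] : TopologicalSpace (CS I) :=
  TopologicalSpace.generateFrom {U | ∃ ζ β, U = cBasic ζ β}
/-- κ-Borel subsets of `2^κ`: smallest family containing the basic open sets and closed
under complements and intersections of size `≤ κ` (indexed by `I`, of cardinality `κ`). -/
inductive IsCBorel {I : Type u} [LT I] : Set (CS I) → Prop
  | basic (ζ : I → Bool) (β : I) : IsCBorel (cBasic ζ β)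
  | compl {s : Set (CS I)} : IsCBorel s → IsCBorel sᶜ
  | iInter {s : I → Set (CS I)} : (∀ i, IsCBorel (s i)) → IsCBorel (⋂ i, s i)

/-!
Every κ-Borel set `s` has the Baire property: it agrees with an open set off a κ-meager set.
Open sets have it trivially; complements do because an open set `O` differs from its closure
only on the nowhere dense set `frontier O`; and κ-intersections do because, as `κ · κ = κ`,
an intersection of κ co-meager sets is co-meager. Since `κ^{<κ} = κ` there are only κ basic
open sets `U`, so the sets on which `f ⁻¹' U` agrees with an open set have a co-meager
intersection, and there every `f ⁻¹' U` is relatively open.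
-/

open Filter Function Cardinal

section Residual

variable {ι X : Type*} [TopologicalSpace X]

variable (ι X) in
def residualOf : Filter X where
  sets := {s | ∃ D : ι → Set X, (∀ i, IsOpen (D i) ∧ Dense (D i)) ∧ ⋂ i, D i ⊆ s}
  univ_sets := ⟨fun _ => univ, fun _ => ⟨isOpen_univ, dense_univ⟩, subset_univ _⟩
  sets_of_superset := fun ⟨D, hD, hs⟩ hst => ⟨D, hD, hs.trans hst⟩
  inter_sets := fun ⟨D, hD, hs⟩ ⟨D', hD', hs'⟩ =>
    ⟨fun i => D i ∩ D' i,
      fun i => ⟨(hD i).1.inter (hD' i).1, (hD i).2.inter_of_isOpen_left (hD' i).2 (hD i).1⟩,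
      iInter_inter_distrib D D' ▸ inter_subset_inter hs hs'⟩

lemma mem_residualOf {s : Set X} :
    s ∈ residualOf ι X ↔ ∃ D : ι → Set X, (∀ i, IsOpen (D i) ∧ Dense (D i)) ∧ ⋂ i, D i ⊆ s :=
  Iff.rfl

lemma mem_residualOf_of_isOpen_of_dense [Nonempty ι] {s : Set X} (ho : IsOpen s)
    (hd : Dense s) : s ∈ residualOf ι X :=
  ⟨fun _ => s, fun _ => ⟨ho, hd⟩, (iInter_const s).subset⟩

lemma eventually_forall_residualOf {J : Type*} {g : ι → J × ι} (hg : Surjective g)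
    {p : J → X → Prop} (h : ∀ j, ∀ᶠ x in residualOf ι X, p j x) :
    ∀ᶠ x in residualOf ι X, ∀ j, p j x := by
  choose D hD hDp using fun j => mem_residualOf.1 (h j)
  refine ⟨fun k => D (g k).1 (g k).2, fun k => hD _ _, fun x hx j => hDp j ?_⟩
  refine mem_iInter.2 fun i => ?_
  obtain ⟨k, hk⟩ := hg (j, i)
  simpa [hk] using mem_iInter.1 hx k

lemma IsOpen.eventuallyEq_closure [Nonempty ι] {O : Set X} (hO : IsOpen O) :
    O =ᶠ[residualOf ι X] closure O := by
  have hfrontier : (frontier O)ᶜ ∈ residualOf ι X := by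
    refine mem_residualOf_of_isOpen_of_dense isClosed_frontier.isOpen_compl ?_
    rw [← interior_eq_empty_iff_dense_compl, ← frontier_compl]
    exact interior_frontier hO.isClosed_compl
  refine eventuallyEq_set.2 (mem_of_superset hfrontier fun x hx => ⟨(subset_closure ·), ?_⟩)
  intro hxO
  by_contra hx'
  exact hx (hO.frontier_eq ▸ ⟨hxO, hx'⟩)

variable (ι) in
def HasBaireProperty (s : Set X) : Prop :=
  ∃ O, IsOpen O ∧ s =ᶠ[residualOf ι X] O

lemma IsOpen.hasBaireProperty {s : Set X} (hs : IsOpen s) : HasBaireProperty ι s :=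
  ⟨s, hs, EventuallyEq.rfl⟩

lemma HasBaireProperty.compl [Nonempty ι] {s : Set X} (h : HasBaireProperty ι s) :
    HasBaireProperty ι sᶜ := by
  obtain ⟨O, hO, hsO⟩ := h
  exact ⟨(closure O)ᶜ, isClosed_closure.isOpen_compl, (hsO.trans (IsOpen.eventuallyEq_closure hO)).compl⟩

lemma HasBaireProperty.iUnion {J : Type*} {g : ι → J × ι} (hg : Surjective g)
    {s : J → Set X} (h : ∀ j, HasBaireProperty ι (s j)) : HasBaireProperty ι (⋃ j, s j) := by
  choose O hO hsO using h
  refine ⟨⋃ j, O j, isOpen_iUnion hO, eventuallyEq_set.2 ?_⟩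
  filter_upwards [eventually_forall_residualOf hg fun j => eventuallyEq_set.1 (hsO j)] with x hx
  simp only [mem_iUnion, hx]

lemma HasBaireProperty.iInter [Nonempty ι] {J : Type*} {g : ι → J × ι} (hg : Surjective g)
    {s : J → Set X} (h : ∀ j, HasBaireProperty ι (s j)) : HasBaireProperty ι (⋂ j, s j) := by
  simpa only [compl_iUnion, compl_compl] using (HasBaireProperty.iUnion hg fun j => (h j).compl).compl

end Residual

lemma continuousOn_generateFrom_of_exists_isOpen {X Y : Type*} [TopologicalSpace X]
    {T : Set (Set Y)} {f : X → Y} {C : Set X}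
    (h : ∀ t ∈ T, ∃ O, IsOpen O ∧ ∀ x ∈ C, f x ∈ t ↔ x ∈ O) :
    @ContinuousOn X Y _ (.generateFrom T) f C := by
  refine continuousOn_to_generateFrom_iff.2 fun x hx t ht hxt => ?_
  obtain ⟨O, hO, hfO⟩ := h t ht
  exact mem_nhdsWithin.2 ⟨O, hO, (hfO x hx).1 hxt, fun y ⟨hyO, hyC⟩ => (hfO y hyC).2 hyO⟩

section Cantor

variable {I : Type u} [LT I]

lemma isOpen_cBasic (ζ : I → Bool) (β : I) : IsOpen (cBasic ζ β) :=
  TopologicalSpace.GenerateOpen.basic _ ⟨ζ, β, rfl⟩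

lemma IsCBorel.hasBaireProperty [Nonempty I] {g : I → I × I} (hg : Surjective g)
    {s : Set (CS I)} (h : IsCBorel s) : HasBaireProperty I s := by
  induction h with
  | basic ζ β => exact IsOpen.hasBaireProperty (isOpen_cBasic ζ β)
  | compl _ ih => exact ih.compl
  | iInter _ ih => exact HasBaireProperty.iInter hg ih

def extendByFalse [DecidableLT I] {β : I} (t : {α // α < β} → Bool) : I → Bool :=
  fun α => if h : α < β then t ⟨α, h⟩ else false

lemma cBasic_extendByFalse [DecidableLT I] (ζ : I → Bool) (β : I) :
    cBasic (extendByFalse fun α : {α // α < β} => ζ α) β = cBasic ζ β := by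
  ext η
  simp +contextual [cBasic, extendByFalse]

lemma mk_sigma_initialSegment_to_bool_le {κ : Cardinal.{u}} (hκ : ℵ₀ ≤ κ)
    (hpow : powerlt κ κ = κ) (hI : #I = κ) (hseg : ∀ i : I, #{j // j < i} < κ) :
    #(Σ β : I, {α // α < β} → Bool) ≤ κ := by
  have hβ : ∀ β : I, #({α // α < β} → Bool) ≤ κ := fun β => calc
    #({α // α < β} → Bool) = 2 ^ #{α // α < β} := by simp
    _ ≤ κ ^ #{α // α < β} := power_le_power_right (ofNat_le_aleph0.trans hκ)
    _ ≤ powerlt κ κ := le_powerlt κ (hseg β)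
    _ = κ := hpow
  calc #(Σ β : I, {α // α < β} → Bool) = sum fun β => #({α // α < β} → Bool) := mk_sigma _
    _ ≤ sum fun _ : I => κ := sum_le_sum _ _ hβ
    _ = #I * κ := sum_const' I κ
    _ = κ := by rw [hI, mul_eq_self hκ]

end Cantor

theorem stmt10_general (κ : Cardinal) (hunc : Cardinal.aleph0 < κ)
    (hpow : Cardinal.powerlt κ κ = κ)
    (I : Type) [LinearOrder I] (hI : Cardinal.mk I = κ)
    (hseg : ∀ i : I, Cardinal.mk {j : I // j < i} < κ)
    (f : CS I → CS I) (hf : ∀ U : Set (CS I), IsOpen U → IsCBorel (f ⁻¹' U)) :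
    ∃ D : I → Set (CS I), (∀ i, IsOpen (D i) ∧ Dense (D i)) ∧
      ContinuousOn f (⋂ i, D i) := by
  have : Nonempty I := mk_ne_zero_iff.1 (hI ▸ (aleph0_pos.trans hunc).ne')
  obtain ⟨e⟩ : Nonempty (I ≃ I × I) := Cardinal.eq.1 (by simp [hI, mul_eq_self hunc.le])
  let P := Σ β : I, {α // α < β} → Bool
  have : Nonempty P := ⟨⟨Classical.arbitrary I, fun _ => false⟩⟩
  obtain ⟨code⟩ : Nonempty (P ↪ I) :=
    (le_def _ _).1 ((mk_sigma_initialSegment_to_bool_le hunc.le hpow hI hseg).trans hI.ge)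
  have hsurj : Surjective (Prod.map (invFun code) id ∘ e) :=
    ((invFun_surjective code.injective).prodMap surjective_id).comp e.surjective
  choose O hO hfO using fun p : P =>
    (hf _ (isOpen_cBasic (extendByFalse p.2) p.1)).hasBaireProperty e.surjective
  obtain ⟨D, hD, hDO⟩ := mem_residualOf.1
    (eventually_forall_residualOf hsurj fun p => eventuallyEq_set.1 (hfO p))
  refine ⟨D, hD, continuousOn_generateFrom_of_exists_isOpen ?_⟩
  rintro _ ⟨ζ, β, rfl⟩
  rw [← cBasic_extendByFalse ζ β]
  exact ⟨O _, hO _, fun x hx => hDO hx ⟨β, fun α => ζ α⟩⟩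

/-- assume `κ^{<κ} = κ`.  Every Borel function `f : 2^κ → 2^κ` (preimages of
open sets are Borel) is continuous on a co-meager set: there are `κ`-many dense open sets
whose intersection is a set on which `f` is continuous. -/
theorem stmt10 (κ : Cardinal) (hreg : κ.IsRegular) (hunc : Cardinal.aleph0 < κ)
    (hpow : Cardinal.powerlt κ κ = κ)
    (I : Type) [LinearOrder I] [WellFoundedLT I] (hI : Cardinal.mk I = κ)
    (hseg : ∀ i : I, Cardinal.mk {j : I // j < i} < κ)
    (f : CS I → CS I) (hf : ∀ U : Set (CS I), IsOpen U → IsCBorel (f ⁻¹' U)) :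
    ∃ D : I → Set (CS I), (∀ i, IsOpen (D i) ∧ Dense (D i)) ∧
      ContinuousOn f (⋂ i, D i) :=
  stmt10_general κ hunc hpow I hI hseg f hf

end GDST
end

section
/- Suppose κ is regular uncountable, there is a tree K ⊆ 2^{<κ} (downward closed) with more than κ branches of length κ, and 2^κ > κ^+ with K having fewer than 2^κ branches of length κ. Then there is an equivalence relation E on 2^κ that is the union of an open set and a closed set, has more than κ equivalence classes, and the identity on 2^κ is not Borel reducible to E. -/
open Set

universe u

namespace GDST

/-!
The relation `E` identifies all points outside the set `B` of branches of `K` and is equality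
on `B`. Since `B` is closed and the diagonal is closed, `E` is the union of the open set
`Bᶜ × Bᶜ` and the closed diagonal; its classes are the singletons of `B` and `Bᶜ`, so there are
more than `κ` of them but fewer than `2^κ`, and no map whatsoever, Borel or not, can reduce
equality on `2^κ` to `E`.
-/

open Cardinal

section Topology

variable {I : Type u}

lemma cBasic_isOpen [LT I] (ζ : I → Bool) (β : I) : IsOpen (cBasic ζ β) :=
  TopologicalSpace.isOpen_generateFrom_of_mem ⟨ζ, β, rfl⟩

lemma mem_cBasic_self [LT I] (ζ : I → Bool) (β : I) : ζ ∈ cBasic ζ β :=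
  fun _ _ => rfl

lemma isOpen_of_forall_exists_cBasic_subset [LT I] {S : Set (CS I)}
    (h : ∀ η ∈ S, ∃ β, cBasic η β ⊆ S) : IsOpen S :=
  isOpen_iff_forall_mem_open.2 fun η hη =>
    let ⟨β, hβ⟩ := h η hη
    ⟨_, hβ, cBasic_isOpen η β, mem_cBasic_self η β⟩

lemma isClopen_setOf_mem_of_extensional [LT I] {K : Set (I × (I → Bool))}
    (hKext : ∀ (β : I) (ζ ζ' : I → Bool), (∀ α : I, α < β → ζ α = ζ' α) →
      ((β, ζ) ∈ K ↔ (β, ζ') ∈ K)) (β : I) :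
    IsClopen {η : CS I | (β, η) ∈ K} := by
  have hcyl : ∀ η ξ : CS I, ξ ∈ cBasic η β → ((β, ξ) ∈ K ↔ (β, η) ∈ K) :=
    fun η ξ hξ => hKext β ξ η hξ
  refine ⟨?_, ?_⟩
  · refine isOpen_compl_iff.1 <| isOpen_of_forall_exists_cBasic_subset fun η hη => ?_
    exact ⟨β, fun ξ hξ hξK => hη ((hcyl η ξ hξ).1 hξK)⟩
  · exact isOpen_of_forall_exists_cBasic_subset fun η hη =>
      ⟨β, fun ξ hξ => (hcyl η ξ hξ).2 hη⟩

lemma isClosed_setOf_forall_mem_of_extensional [LT I] {K : Set (I × (I → Bool))}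
    (hKext : ∀ (β : I) (ζ ζ' : I → Bool), (∀ α : I, α < β → ζ α = ζ' α) →
      ((β, ζ) ∈ K ↔ (β, ζ') ∈ K)) :
    IsClosed {η : CS I | ∀ β, (β, η) ∈ K} := by
  rw [ofPred_forall]
  exact isClosed_iInter fun β => (isClopen_setOf_mem_of_extensional hKext β).isClosed

instance [LinearOrder I] [NoMaxOrder I] : T2Space (CS I) where
  t2 η ξ hne := by
    obtain ⟨α, hα⟩ := Function.ne_iff.1 hne
    obtain ⟨β, hαβ⟩ := exists_gt α
    refine ⟨cBasic η β, cBasic ξ β, cBasic_isOpen η β, cBasic_isOpen ξ β,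
      mem_cBasic_self η β, mem_cBasic_self ξ β, disjoint_left.2 fun ζ hη hξ => hα ?_⟩
    rw [← hη α hαβ, hξ α hαβ]

end Topology

lemma noMaxOrder_of_mk_Iio_lt {I : Type u} [LinearOrder I] [Infinite I]
    (hseg : ∀ i : I, #{j : I // j < i} < #I) : NoMaxOrder I := by
  refine ⟨fun i => not_forall_not.1 fun hmax => lt_irrefl #I ?_⟩
  have huniv : insert i (Iio i) = Set.univ :=
    eq_univ_of_forall fun j => (le_of_not_gt (hmax j)).eq_or_lt
  calc #I = #(insert i (Iio i) : Set I) := by rw [huniv, mk_univ]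
    _ ≤ #(Iio i) + 1 := mk_insert_le
    _ < #I := add_lt_of_lt (aleph0_le_mk I) (hseg i) (one_lt_aleph0.trans_le (aleph0_le_mk I))

section Collapse

variable {X : Type u} (B : Set X)

noncomputable def collapseCompl (x : X) : Option B :=
  open Classical in if h : x ∈ B then some ⟨x, h⟩ else none

variable {B}

lemma collapseCompl_eq_collapseCompl_iff {x y : X} :
    collapseCompl B x = collapseCompl B y ↔ x = y ∨ (x ∉ B ∧ y ∉ B) := by
  by_cases hx : x ∈ B <;> by_cases hy : y ∈ B <;>
    simp [collapseCompl, hx, hy] <;> rintro rfl <;> contradiction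

lemma setOf_collapseCompl_eq :
    {p : X × X | collapseCompl B p.1 = collapseCompl B p.2} = Bᶜ ×ˢ Bᶜ ∪ diagonal X := by
  ext ⟨x, y⟩
  simp only [mem_ofPred_eq, collapseCompl_eq_collapseCompl_iff, mem_union, mem_prod,
    mem_compl_iff, mem_diagonal_iff]
  tauto

lemma mk_le_mk_quotient_ker_collapseCompl :
    #B ≤ #(Quotient (Setoid.ker (collapseCompl B))) := by
  refine mk_le_of_injective (f := fun b : B => ⟦b.1⟧) fun b b' hbb' => ?_
  rcases collapseCompl_eq_collapseCompl_iff.1 (Quotient.exact hbb') with h | ⟨hb, -⟩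
  · exact Subtype.ext h
  · exact absurd b.2 hb

lemma not_reduces_to_ker_collapseCompl (hB : ℵ₀ ≤ #B) (hBX : #B < #X) (f : X → X) :
    ¬ ∀ x y : X, (x = y ↔ collapseCompl B (f x) = collapseCompl B (f y)) := by
  intro hred
  have hinj : Function.Injective (collapseCompl B ∘ f) := fun x y hxy => (hred x y).2 hxy
  have := mk_le_of_injective hinj
  rw [mk_option, add_one_eq hB] at this
  exact this.not_gt hBX

end Collapse

theorem stmt14_general (κ : Cardinal) (hunc : Cardinal.aleph0 < κ)
    (I : Type) [LinearOrder I] (hI : Cardinal.mk I = κ)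
    (hseg : ∀ i : I, Cardinal.mk {j : I // j < i} < κ)
    (K : Set (I × (I → Bool)))
    (hKext : ∀ (β : I) (ζ ζ' : I → Bool), (∀ α : I, α < β → ζ α = ζ' α) →
      ((β, ζ) ∈ K ↔ (β, ζ') ∈ K))
    (hmany : κ < Cardinal.mk {η : I → Bool // ∀ β : I, (β, η) ∈ K})
    (hfew : Cardinal.mk {η : I → Bool // ∀ β : I, (β, η) ∈ K} < 2 ^ κ) :
    ∃ (r : CS I → CS I → Prop) (hr : Equivalence r),
      (∃ (U V : Set (CS I × CS I)), IsOpen U ∧ IsClosed V ∧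
        {x : CS I × CS I | r x.1 x.2} = U ∪ V) ∧
      κ < Cardinal.mk (Quotient (Setoid.mk r hr)) ∧
      ¬ ∃ f : CS I → CS I, (∀ U : Set (CS I), IsOpen U → IsCBorel (f ⁻¹' U)) ∧
        ∀ η ξ : CS I, (η = ξ ↔ r (f η) (f ξ)) := by
  set B : Set (CS I) := {η | ∀ β, (β, η) ∈ K}
  have : Infinite I := infinite_iff.2 (hI ▸ hunc.le)
  have : NoMaxOrder I := noMaxOrder_of_mk_Iio_lt (hI ▸ hseg)
  have hCS : #(CS I) = 2 ^ κ := by rw [CS, ← hI, ← mk_bool, power_def]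
  refine ⟨fun η ξ => collapseCompl B η = collapseCompl B ξ, (Setoid.ker _).iseqv,
    ⟨_, _, (isClosed_setOf_forall_mem_of_extensional hKext).isOpen_compl.prod
      (isClosed_setOf_forall_mem_of_extensional hKext).isOpen_compl,
      isClosed_diagonal, setOf_collapseCompl_eq⟩,
    hmany.trans_le mk_le_mk_quotient_ker_collapseCompl, ?_⟩
  rintro ⟨f, -, hred⟩
  exact not_reduces_to_ker_collapseCompl (hunc.trans hmany).le (hCS ▸ hfew) f hred

/-- suppose `κ` is regular uncountable (with `κ^{<κ} = κ`), there is a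
downward-closed tree `K ⊆ 2^{<κ}` (modelled as a set of pairs `(β, ζ)` depending only on
`ζ ↾ β`) with more than `κ` branches of length `κ`, and `2^κ > κ⁺` while `K` has fewer
than `2^κ` branches.  Then there is an equivalence relation `E` on `2^κ` which is the union
of an open set and a closed set, has more than `κ` equivalence classes, and the identity on
`2^κ` is not Borel reducible to `E`. -/
theorem stmt14 (κ : Cardinal) (hreg : κ.IsRegular) (hunc : Cardinal.aleph0 < κ)
    (hpow : Cardinal.powerlt κ κ = κ)
    (I : Type) [LinearOrder I] [WellFoundedLT I] (hI : Cardinal.mk I = κ)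
    (hseg : ∀ i : I, Cardinal.mk {j : I // j < i} < κ)
    (K : Set (I × (I → Bool)))
    (hKext : ∀ (β : I) (ζ ζ' : I → Bool), (∀ α : I, α < β → ζ α = ζ' α) →
      ((β, ζ) ∈ K ↔ (β, ζ') ∈ K))
    (hKdc : ∀ (β : I) (ζ : I → Bool), (β, ζ) ∈ K → ∀ γ : I, γ ≤ β → (γ, ζ) ∈ K)
    (hmany : κ < Cardinal.mk {η : I → Bool // ∀ β : I, (β, η) ∈ K})
    (hbig : Order.succ κ < 2 ^ κ)
    (hfew : Cardinal.mk {η : I → Bool // ∀ β : I, (β, η) ∈ K} < 2 ^ κ) :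
    ∃ (r : CS I → CS I → Prop) (hr : Equivalence r),
      (∃ (U V : Set (CS I × CS I)), IsOpen U ∧ IsClosed V ∧
        {x : CS I × CS I | r x.1 x.2} = U ∪ V) ∧
      κ < Cardinal.mk (Quotient (Setoid.mk r hr)) ∧
      ¬ ∃ f : CS I → CS I, (∀ U : Set (CS I), IsOpen U → IsCBorel (f ⁻¹' U)) ∧
        ∀ η ξ : CS I, (η = ξ ↔ r (f η) (f ξ)) :=
  stmt14_general κ hunc I hI hseg K hKext hmany hfew

end GDST
end

section
/- Let κ be regular uncountable, X ⊆ κ a set of ordinals, and Y ⊆ κ a set of ordinals of uncountable cofinality. Suppose X ◊-reflects to Y, i.e. there is a sequence ⟨D_α : α ∈ Y⟩ with each D_α ⊆ α stationary in α, such that for every stationary Z ⊆ X the set {α ∈ Y : D_α = Z ∩ α} is stationary in κ. Then E_X is continuously reducible to E_Y, where for W ⊆ κ, E_W relates A, B ⊆ κ iff (A Δ B) ∩ W is non-stationary in κ. Moreover the map f(A) = {α ∈ Y : A ∩ X ∩ D_α is stationary in α} is such a reduction. -/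
open Set

universe u

namespace GDST

/-- `C` is closed in `o`: every nonzero accumulation point of `C` below `o` lies in `C`. -/
def ClosedIn (C : Set Ordinal) (o : Ordinal) : Prop :=
  ∀ a : Ordinal, a < o → a ≠ 0 → (∀ b : Ordinal, b < a → ∃ c ∈ C, b < c ∧ c < a) → a ∈ C

/-- `C` is unbounded in `o`. -/
def UnbIn (C : Set Ordinal) (o : Ordinal) : Prop :=
  ∀ a : Ordinal, a < o → ∃ b ∈ C, a < b ∧ b < o

/-- `C` is closed and unbounded (club) in `o`. -/
def ClubIn (C : Set Ordinal) (o : Ordinal) : Prop := ClosedIn C o ∧ UnbIn C o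

/-- `S` is stationary in `o`: it meets every club subset of `o`. -/
def StatIn (S : Set Ordinal) (o : Ordinal) : Prop := ∀ C, ClubIn C o → (S ∩ C).Nonempty

/-- The ordinals `< κ`, our copy of the cardinal `κ` as an ordered set. -/
abbrev Sub (κ : Cardinal) : Type 1 := {o : Ordinal // o < κ.ord}

/-- The subset of `κ` coded by `η ∈ 2^κ`. -/
def toSet (κ : Cardinal) (η : CS (Sub κ)) : Set Ordinal :=
  {o : Ordinal | ∃ h : o < κ.ord, η ⟨o, h⟩ = true}

/-!
If `A` and `B` agree on `X` off a club `C`, then for every accumulation point `α ∈ Y` of `C` the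
sets `A ∩ X ∩ D α` and `B ∩ X ∩ D α` agree on the club `C ∩ α` of `α`, so `f A` and `f B` agree
on `Y` off the club of accumulation points of `C`. Conversely, if `(A \ B) ∩ X` is stationary,
then for stationarily many `α ∈ Y` we have `D α = (A \ B) ∩ X ∩ α`; for such `α` the set
`A ∩ X ∩ D α = D α` is stationary in `α` while `B ∩ X ∩ D α` is empty, so `α ∈ f A \ f B`.
Since `D α ⊆ α`, whether `α ∈ f A` depends only on `A ∩ α`, which makes `f` continuous.
-/

open Cardinal

section Clubs

open Order Set.Notation

variable {o : Ordinal.{u}} {C C' S T : Set Ordinal.{u}}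

theorem isSuccLimit_of_aleph0_lt_cof (ho : ℵ₀ < o.cof) : IsSuccLimit o :=
  Ordinal.one_lt_cof_iff.1 (one_lt_aleph0.trans ho)

theorem unbIn_iff_isCofinal (ho : IsSuccPrelimit o) : UnbIn C o ↔ IsCofinal (Iio o ↓∩ C) := by
  constructor
  · rintro hC ⟨a, ha⟩
    obtain ⟨b, hbC, hab, hbo⟩ := hC a ha
    exact ⟨⟨b, hbo⟩, hbC, hab.le⟩
  · intro hC a ha
    obtain ⟨b, hbC, hab⟩ := hC ⟨succ a, ho.succ_lt ha⟩
    exact ⟨b, hbC, (lt_succ a).trans_le hab, b.2⟩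

theorem closedIn_iff_dirSupClosed : ClosedIn C o ↔ DirSupClosed (Iio o ↓∩ C) := by
  rw [dirSupClosed_iff_of_linearOrder]
  constructor
  · intro hC d hdC ⟨x, hx⟩ a ha
    by_cases had : a ∈ d
    · exact hdC had
    have hcof : ∀ b < a, ∃ c ∈ d, b < c ∧ c < a := fun b hb => by
      obtain ⟨c, hcd, hbc⟩ := (lt_isLUB_iff ha).1 hb
      exact ⟨c, hcd, hbc, (ha.1 hcd).lt_of_ne fun h => had (h ▸ hcd)⟩
    have hxa : x.1 < a.1 := (ha.1 hx).lt_of_ne fun h => had (h ▸ hx)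
    refine hC a a.2 (zero_le.trans_lt hxa).ne' fun b hb => ?_
    obtain ⟨c, hcd, hbc, hca⟩ := hcof ⟨b, hb.trans a.2⟩ hb
    exact ⟨c, hdC hcd, hbc, hca⟩
  · intro hC a hao ha0 hacc
    have hlub : IsLUB (Iio ⟨a, hao⟩ ∩ (Iio o ↓∩ C)) ⟨a, hao⟩ := by
      refine ⟨fun c hc => hc.1.le, fun u hu => not_lt.1 fun hua => ?_⟩
      obtain ⟨c, hcC, huc, hca⟩ := hacc u hua
      exact (hu (show (⟨c, hca.trans hao⟩ : Iio o) ∈ _ from ⟨hca, hcC⟩)).not_gt huc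
    obtain ⟨c, hcC, -, hca⟩ := hacc 0 (pos_iff_ne_zero.2 ha0)
    exact hC inter_subset_right ⟨⟨c, hca.trans hao⟩, hca, hcC⟩ hlub

theorem clubIn_iff_isClub (ho : IsSuccPrelimit o) : ClubIn C o ↔ IsClub (Iio o ↓∩ C) := by
  rw [isClub_iff, ClubIn, closedIn_iff_dirSupClosed, unbIn_iff_isCofinal ho]

theorem statIn_iff_isStationary (ho : IsSuccPrelimit o) :
    StatIn S o ↔ IsStationary (Iio o ↓∩ S) := by
  constructor
  · intro hS t ht
    have hCt : Iio o ↓∩ (Subtype.val '' t) = t := preimage_image_eq t Subtype.val_injective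
    obtain ⟨-, hxS, ⟨x, hxt, rfl⟩⟩ := hS _ ((clubIn_iff_isClub ho).2 (hCt ▸ ht))
    exact ⟨x, hxS, hxt⟩
  · rintro hS C hC
    obtain ⟨x, hxS, hxC⟩ := hS ((clubIn_iff_isClub ho).1 hC)
    exact ⟨x, hxS, hxC⟩

theorem cof_Iio_ne_aleph0 (ho : ℵ₀ < o.cof) : Order.cof (Iio o) ≠ ℵ₀ := by
  rw [Ordinal.cof_Iio, ← Ordinal.lift_cof]
  exact fun h => ho.ne' (Cardinal.lift_eq_aleph0.1 h)

theorem ClubIn.inter (ho : ℵ₀ < o.cof) (hC : ClubIn C o) (hC' : ClubIn C' o) :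
    ClubIn (C ∩ C') o := by
  have hlim := (isSuccLimit_of_aleph0_lt_cof ho).isSuccPrelimit
  rw [clubIn_iff_isClub hlim] at *
  exact hC.inter (cof_Iio_ne_aleph0 ho) hC'

theorem statIn_union_iff (ho : ℵ₀ < o.cof) : StatIn (S ∪ T) o ↔ StatIn S o ∨ StatIn T o := by
  have hlim := (isSuccLimit_of_aleph0_lt_cof ho).isSuccPrelimit
  simp only [statIn_iff_isStationary hlim, preimage_union]
  exact isStationary_union_iff (cof_Iio_ne_aleph0 ho)

theorem statIn_symmDiff_inter_iff {W : Set Ordinal} (ho : ℵ₀ < o.cof) :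
    StatIn (symmDiff S T ∩ W) o ↔ StatIn ((S \ T) ∩ W) o ∨ StatIn ((T \ S) ∩ W) o := by
  rw [Set.symmDiff_def, union_inter_distrib_right, statIn_union_iff ho]

theorem not_statIn_empty (ho : IsSuccPrelimit o) : ¬ StatIn ∅ o := by
  simp [statIn_iff_isStationary ho]

theorem not_statIn_iff : ¬ StatIn S o ↔ ∃ C, ClubIn C o ∧ Disjoint S C := by
  simp [StatIn, disjoint_iff, not_nonempty_iff_eq_empty]

theorem StatIn.mono (hS : StatIn S o) (h : S ⊆ T) : StatIn T o :=
  fun C hC => (hS C hC).mono (inter_subset_inter_left C h)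

theorem StatIn.of_inter_subset (ho : ℵ₀ < o.cof) (hS : StatIn S o) (hC : ClubIn C o)
    (h : S ∩ C ⊆ T) : StatIn T o := fun C' hC' => by
  obtain ⟨x, hxS, hxC, hxC'⟩ := hS _ (hC.inter ho hC')
  exact ⟨x, h ⟨hxS, hxC⟩, hxC'⟩

theorem statIn_congr (ho : ℵ₀ < o.cof) (hC : ClubIn C o) (h : S ∩ C = T ∩ C) :
    StatIn S o ↔ StatIn T o :=
  ⟨fun hS => hS.of_inter_subset ho hC (h ▸ inter_subset_left),
    fun hT => hT.of_inter_subset ho hC (h.symm ▸ inter_subset_left)⟩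

def accPts (C : Set Ordinal) (o : Ordinal) : Set Ordinal :=
  {a | a < o ∧ a ≠ 0 ∧ ∀ b < a, ∃ c ∈ C, b < c ∧ c < a}

theorem UnbIn.exists_mem_accPts (ho : ℵ₀ < o.cof) (hC : UnbIn C o) {a : Ordinal} (ha : a < o) :
    ∃ s ∈ accPts C o, a < s := by
  choose! next hnextC hlt hnext_lt using hC
  let g : ℕ → Ordinal := fun n => next^[n] a
  have hg_succ (n : ℕ) : g (n + 1) = next (g n) := Function.iterate_succ_apply' ..
  have hg_lt (n : ℕ) : g n < o := by
    induction n with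
    | zero => exact ha
    | succ n ih => exact hg_succ n ▸ hnext_lt _ ih
  have hg_mono : StrictMono g := strictMono_nat_of_lt_succ fun n => hg_succ n ▸ hlt _ (hg_lt n)
  have hs (n : ℕ) : g n < ⨆ m, g m :=
    (hg_mono n.lt_succ_self).trans_le (Ordinal.le_iSup g _)
  have hso : ⨆ m, g m < o := Ordinal.lift_iSup_lt_of_lt_cof (by simpa using ho) hg_lt
  refine ⟨⨆ m, g m, ⟨hso, (zero_le.trans_lt (hs 0)).ne', fun b hb => ?_⟩, hs 0⟩
  obtain ⟨n, hn⟩ := Ordinal.lt_iSup_iff.1 hb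
  exact ⟨g (n + 1), hg_succ n ▸ hnextC _ (hg_lt n), hn.trans (hg_mono n.lt_succ_self), hs _⟩

theorem UnbIn.clubIn_accPts (ho : ℵ₀ < o.cof) (hC : UnbIn C o) : ClubIn (accPts C o) o := by
  refine ⟨fun a hao ha0 hacc => ⟨hao, ha0, fun b hb => ?_⟩, fun a ha => ?_⟩
  · obtain ⟨d, hd, hbd, hda⟩ := hacc b hb
    obtain ⟨c, hc, hbc, hcd⟩ := hd.2.2 b hbd
    exact ⟨c, hc, hbc, hcd.trans hda⟩
  · obtain ⟨s, hs, has⟩ := hC.exists_mem_accPts ho ha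
    exact ⟨s, hs, has, hs.1⟩

theorem ClosedIn.clubIn_inter_Iio {α : Ordinal} (hC : ClosedIn C o) (hα : α ∈ accPts C o) :
    ClubIn (C ∩ Iio α) α := by
  refine ⟨fun a haα ha0 hacc => ⟨hC a (haα.trans hα.1) ha0 fun b hb => ?_, haα⟩, fun b hb => ?_⟩
  · obtain ⟨c, hc, hbc, hca⟩ := hacc b hb
    exact ⟨c, hc.1, hbc, hca⟩
  · obtain ⟨c, hc, hbc, hcα⟩ := hα.2.2 b hb
    exact ⟨c, ⟨hc, hcα⟩, hbc, hcα⟩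

end Clubs

theorem continuous_of_eqOn_Iio {I : Type u} [Preorder I] {f : CS I → CS I}
    (hf : ∀ (η η' : CS I) (α : I), EqOn η η' (Iio α) → f η α = f η' α) : Continuous f := by
  refine continuous_generateFrom_iff.2 ?_
  rintro _ ⟨ζ, β, rfl⟩
  have hU : f ⁻¹' cBasic ζ β = ⋃ η ∈ f ⁻¹' cBasic ζ β, cBasic η β := by
    ext η'
    simp only [mem_iUnion, mem_preimage]
    refine ⟨fun h => ⟨η', h, fun _ _ => rfl⟩, fun ⟨η, hη, hη'⟩ γ hγ => ?_⟩
    rw [hf η' η γ fun δ hδ => hη' δ (hδ.trans hγ)]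
    exact hη γ hγ
  rw [hU]
  exact isOpen_biUnion fun η _ => TopologicalSpace.isOpen_generateFrom_of_mem ⟨η, β, rfl⟩

section Reflection

variable {κ : Cardinal} {X Y : Set Ordinal} {D : Ordinal → Set Ordinal}

theorem toSet_inter_Iio_eq {η η' : CS (Sub κ)} {α : Sub κ} (h : EqOn η η' (Iio α)) :
    toSet κ η ∩ Iio α.1 = toSet κ η' ∩ Iio α.1 := by
  ext x
  refine ⟨fun ⟨⟨hx, hηx⟩, hxα⟩ => ⟨⟨hx, ?_⟩, hxα⟩, fun ⟨⟨hx, hηx⟩, hxα⟩ => ⟨⟨hx, ?_⟩, hxα⟩⟩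
  · rwa [← @h ⟨x, hx⟩ hxα]
  · rwa [@h ⟨x, hx⟩ hxα]

open Classical in
noncomputable def reflectionMap (κ : Cardinal) (X Y : Set Ordinal) (D : Ordinal → Set Ordinal)
    (η : CS (Sub κ)) : CS (Sub κ) :=
  fun α : Sub κ => decide (α.1 ∈ Y ∧ StatIn (toSet κ η ∩ X ∩ D α.1) α.1)

open Classical in
theorem reflectionMap_apply_eq_true {η : CS (Sub κ)} {α : Sub κ} :
    reflectionMap κ X Y D η α = true ↔ α.1 ∈ Y ∧ StatIn (toSet κ η ∩ X ∩ D α.1) α.1 :=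
  decide_eq_true_iff

theorem mem_toSet_reflectionMap (hY : Y ⊆ Iio κ.ord) {η : CS (Sub κ)} {α : Ordinal} :
    α ∈ toSet κ (reflectionMap κ X Y D η) ↔ α ∈ Y ∧ StatIn (toSet κ η ∩ X ∩ D α) α :=
  ⟨fun ⟨_, h⟩ => reflectionMap_apply_eq_true.1 h,
    fun h => ⟨hY h.1, reflectionMap_apply_eq_true.2 h⟩⟩

theorem continuous_reflectionMap (hD : ∀ α ∈ Y, D α ⊆ Iio α) :
    Continuous (reflectionMap κ X Y D) := by
  refine continuous_of_eqOn_Iio fun η η' α h => Bool.eq_iff_iff.2 ?_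
  simp only [reflectionMap_apply_eq_true, and_congr_right_iff]
  intro hα
  have hDα : ∀ η : CS (Sub κ), toSet κ η ∩ X ∩ D α.1 = toSet κ η ∩ Iio α.1 ∩ X ∩ D α.1 :=
    fun η => by ext x; simp only [mem_inter_iff]; grind [hD α hα]
  rw [hDα, hDα η', toSet_inter_Iio_eq h]

theorem reflectionMap_not_statIn_symmDiff (hκ : ℵ₀ < κ.ord.cof) (hY : Y ⊆ Iio κ.ord)
    (hYcof : ∀ α ∈ Y, ℵ₀ < α.cof) {A B : CS (Sub κ)}
    (h : ¬ StatIn (symmDiff (toSet κ A) (toSet κ B) ∩ X) κ.ord) :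
    ¬ StatIn (symmDiff (toSet κ (reflectionMap κ X Y D A))
      (toSet κ (reflectionMap κ X Y D B)) ∩ Y) κ.ord := by
  obtain ⟨C, hC, hdisj⟩ := not_statIn_iff.1 h
  intro hstat
  obtain ⟨α, ⟨hαf, hαY⟩, hαC⟩ := hstat _ (hC.2.clubIn_accPts hκ)
  have hAB : StatIn (toSet κ A ∩ X ∩ D α) α ↔ StatIn (toSet κ B ∩ X ∩ D α) α := by
    refine statIn_congr (hYcof α hαY) (hC.1.clubIn_inter_Iio hαC) (ext fun x => ?_)
    have : x ∈ symmDiff (toSet κ A) (toSet κ B) ∩ X → x ∉ C := fun hx => disjoint_left.1 hdisj hx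
    simp only [mem_inter_iff, mem_symmDiff] at this ⊢
    tauto
  rw [mem_symmDiff, mem_toSet_reflectionMap hY, mem_toSet_reflectionMap hY, hAB] at hαf
  tauto

theorem reflectionMap_statIn_sdiff (hY : Y ⊆ Iio κ.ord) (hYcof : ∀ α ∈ Y, ℵ₀ < α.cof)
    (hD : ∀ α ∈ Y, StatIn (D α) α)
    (hguess : ∀ Z : Set Ordinal, Z ⊆ X → StatIn Z κ.ord →
      StatIn {α | α ∈ Y ∧ D α = Z ∩ Iio α} κ.ord)
    {A B : CS (Sub κ)} (h : StatIn ((toSet κ A \ toSet κ B) ∩ X) κ.ord) :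
    StatIn ((toSet κ (reflectionMap κ X Y D A) \ toSet κ (reflectionMap κ X Y D B)) ∩ Y)
      κ.ord := by
  refine (hguess _ inter_subset_right h).mono ?_
  rintro α ⟨hαY, hDα⟩
  have hA : toSet κ A ∩ X ∩ D α = D α := by
    rw [hDα]
    exact inter_eq_right.2 fun x hx => ⟨hx.1.1.1, hx.1.2⟩
  have hB : toSet κ B ∩ X ∩ D α = ∅ := by
    rw [hDα]
    exact eq_empty_of_forall_notMem fun x hx => hx.2.1.1.2 hx.1.1
  rw [mem_inter_iff, mem_sdiff, mem_toSet_reflectionMap hY, mem_toSet_reflectionMap hY, hA, hB]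
  exact ⟨⟨⟨hαY, hD α hαY⟩, fun h' => not_statIn_empty
    (isSuccLimit_of_aleph0_lt_cof (hYcof α hαY)).isSuccPrelimit h'.2⟩, hαY⟩

theorem reflectionMap_statIn_symmDiff (hκ : ℵ₀ < κ.ord.cof) (hY : Y ⊆ Iio κ.ord)
    (hYcof : ∀ α ∈ Y, ℵ₀ < α.cof) (hD : ∀ α ∈ Y, StatIn (D α) α)
    (hguess : ∀ Z : Set Ordinal, Z ⊆ X → StatIn Z κ.ord →
      StatIn {α | α ∈ Y ∧ D α = Z ∩ Iio α} κ.ord)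
    {A B : CS (Sub κ)} (h : StatIn (symmDiff (toSet κ A) (toSet κ B) ∩ X) κ.ord) :
    StatIn (symmDiff (toSet κ (reflectionMap κ X Y D A))
      (toSet κ (reflectionMap κ X Y D B)) ∩ Y) κ.ord := by
  rw [statIn_symmDiff_inter_iff hκ] at h ⊢
  exact h.imp (reflectionMap_statIn_sdiff hY hYcof hD hguess)
    (reflectionMap_statIn_sdiff hY hYcof hD hguess)

end Reflection

theorem stmt15_general (κ : Cardinal) (hreg : κ.IsRegular) (hunc : Cardinal.aleph0 < κ)
    (X Y : Set Ordinal) (hYsub : Y ⊆ Set.Iio κ.ord)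
    (hYcof : ∀ α ∈ Y, Cardinal.aleph0 < Ordinal.cof α)
    (D : Ordinal → Set Ordinal)
    (hD1 : ∀ α ∈ Y, D α ⊆ Set.Iio α ∧ StatIn (D α) α)
    (hD2 : ∀ Z : Set Ordinal, Z ⊆ X → StatIn Z κ.ord →
      StatIn {α | α ∈ Y ∧ D α = Z ∩ Set.Iio α} κ.ord) :
    ∃ f : CS (Sub κ) → CS (Sub κ), Continuous f ∧
      (∀ (η : CS (Sub κ)) (α : Sub κ),
        f η α = true ↔ (α.1 ∈ Y ∧ StatIn (toSet κ η ∩ X ∩ D α.1) α.1)) ∧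
      (∀ A B : CS (Sub κ),
        (¬ StatIn (symmDiff (toSet κ A) (toSet κ B) ∩ X) κ.ord) ↔
        (¬ StatIn (symmDiff (toSet κ (f A)) (toSet κ (f B)) ∩ Y) κ.ord)) := by
  have hκ : ℵ₀ < κ.ord.cof := by rwa [hreg.cof_ord]
  have hDstat : ∀ α ∈ Y, StatIn (D α) α := fun α hα => (hD1 α hα).2
  refine ⟨reflectionMap κ X Y D, continuous_reflectionMap fun α hα => (hD1 α hα).1,
    fun η α => reflectionMap_apply_eq_true, fun A B => ⟨?_, ?_⟩⟩
  · exact reflectionMap_not_statIn_symmDiff hκ hYsub hYcof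
  · exact not_imp_not.2 (reflectionMap_statIn_symmDiff hκ hYsub hYcof hDstat hD2)

/-- if `X` ◊-reflects to `Y` (a set of ordinals of uncountable cofinality),
witnessed by a sequence `⟨D α : α ∈ Y⟩` of sets stationary in `α` guessing every stationary
`Z ⊆ X` stationarily often, then `E_X` is continuously reducible to `E_Y`, and moreover the
map `f(A) = {α ∈ Y : A ∩ X ∩ D α is stationary in α}` is such a reduction. -/
theorem stmt15 (κ : Cardinal) (hreg : κ.IsRegular) (hunc : Cardinal.aleph0 < κ)
    (X Y : Set Ordinal) (hXsub : X ⊆ Set.Iio κ.ord) (hYsub : Y ⊆ Set.Iio κ.ord)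
    (hYcof : ∀ α ∈ Y, Cardinal.aleph0 < Ordinal.cof α)
    (D : Ordinal → Set Ordinal)
    (hD1 : ∀ α ∈ Y, D α ⊆ Set.Iio α ∧ StatIn (D α) α)
    (hD2 : ∀ Z : Set Ordinal, Z ⊆ X → StatIn Z κ.ord →
      StatIn {α | α ∈ Y ∧ D α = Z ∩ Set.Iio α} κ.ord) :
    ∃ f : CS (Sub κ) → CS (Sub κ), Continuous f ∧
      (∀ (η : CS (Sub κ)) (α : Sub κ),
        f η α = true ↔ (α.1 ∈ Y ∧ StatIn (toSet κ η ∩ X ∩ D α.1) α.1)) ∧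
      (∀ A B : CS (Sub κ),
        (¬ StatIn (symmDiff (toSet κ A) (toSet κ B) ∩ X) κ.ord) ↔
        (¬ StatIn (symmDiff (toSet κ (f A)) (toSet κ (f B)) ∩ Y) κ.ord)) :=
  stmt15_general κ hreg hunc X Y hYsub hYcof D hD1 hD2

end GDST
end
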